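/- arXiv:2310.18246 — 3 statements merged into one kernel-verified Lean document; each statement's English description precedes it below -/
import Mathlib

section
/- (Clustering Lemma) Let (X,d) be a finite metric space of cardinality N and let L > 0. Then there exist a subset S ⊆ X and radii {r_s}_{s∈S} satisfying: (1) L ≤ r_s ≤ 4^{N−1} L for every s ∈ S; (2) if s, s' ∈ S are distinct then d(s,s') > 2r_s + 2r_{s'}; (3) for every x ∈ X there is a unique s ∈ S such that d(x,s) ≤ r_s. -/
open Finset

private lemma pow_ineq_base (K : ℕ) : (2:ℝ)^(K+2) ≤ 4^K + 4 := by
  have h4 : (4:ℝ)^K = (2^K)^2 := by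
    rw [show (4:ℝ) = 2^2 by norm_num, ← pow_mul, mul_comm, pow_mul]
  have h2 : (2:ℝ)^(K+2) = 4 * 2^K := by rw [pow_add]; ring
  nlinarith [sq_nonneg ((2:ℝ)^K - 2)]

private lemma psi_le (m N : ℕ) (hm : 1 ≤ m) (hmN : m ≤ N) :
    (2:ℝ)^(m+1) - 4 ≤ 4^(N-1) := by
  obtain ⟨K, rfl⟩ : ∃ K, N = K+1 := ⟨N-1, by omega⟩
  have h1 : (2:ℝ)^(m+1) ≤ 2^(K+2) := by
    apply pow_le_pow_right₀ one_le_two; omega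
  simp only [Nat.add_sub_cancel]
  linarith [pow_ineq_base K, h1]

private lemma key_ineq (L a b : ℝ) (hL : 0 < L) (m m' : ℕ) (hm : 1 ≤ m) (hm' : 1 ≤ m')
    (hb0 : 0 ≤ b) (hba : b ≤ a)
    (ha : a ≤ ((2:ℝ)^(m+1) - 4) * L) (hbb : b ≤ ((2:ℝ)^(m'+1) - 4) * L) :
    2*a + 3*b + 4*L ≤ ((2:ℝ)^(m+m'+1) - 4) * L := by
  have e1 : (2:ℝ)^(m+1) = 2*2^m := by rw [pow_succ]; ring
  have e2 : (2:ℝ)^(m'+1) = 2*2^m' := by rw [pow_succ]; ring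
  have e3 : (2:ℝ)^(m+m'+1) = 2*(2^m * 2^m') := by
    rw [pow_succ, pow_add]; ring
  rw [e1] at ha; rw [e2] at hbb; rw [e3]
  rcases le_or_gt m' m with hcase | hcase
  · rcases Nat.lt_or_ge m' 2 with h2 | h2
    · have hm'1 : m' = 1 := by omega
      subst hm'1
      norm_num at hbb
      have hp : (2:ℝ)^(1:ℕ) = 2 := pow_one 2
      have hqp : (2:ℝ)^(1:ℕ) ≤ 2^m := pow_le_pow_right₀ one_le_two hcase
      rw [hp] at hqp ⊢
      nlinarith [hL.le]
    · have hq4 : (4:ℝ) ≤ 2^m' := by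
        calc (4:ℝ) = 2^2 := by norm_num
        _ ≤ 2^m' := pow_le_pow_right₀ one_le_two h2
      have hqp : (2:ℝ)^m' ≤ 2^m := pow_le_pow_right₀ one_le_two hcase
      have h1 : 0 ≤ ((2:ℝ)^m - 3) * ((2:ℝ)^m' - 2) * L :=
        mul_nonneg (mul_nonneg (by linarith) (by linarith)) hL.le
      nlinarith [h1, hL.le]
  · rcases Nat.lt_or_ge m 2 with h2 | h2
    · have hm1 : m = 1 := by omega
      subst hm1
      norm_num at ha
      have h8 : (8:ℝ) ≤ 2*(2^1 * 2^m') := by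
        have : (2:ℝ)^2 ≤ 2^m' := pow_le_pow_right₀ one_le_two (by omega)
        norm_num at this ⊢
        nlinarith
      nlinarith [hL.le]
    · have hp4 : (4:ℝ) ≤ 2^m := by
        calc (4:ℝ) = 2^2 := by norm_num
        _ ≤ 2^m := pow_le_pow_right₀ one_le_two h2
      have h2q : 2*(2:ℝ)^m ≤ 2^m' := by
        calc 2*(2:ℝ)^m = 2^(m+1) := by rw [pow_succ]; ring
        _ ≤ 2^m' := pow_le_pow_right₀ one_le_two (by omega)
      have hpn : (0:ℝ) ≤ 2^m := by positivity
      nlinarith [mul_nonneg (mul_nonneg (sub_nonneg.mpr h2q) hpn) hL.le,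
        mul_nonneg (sq_nonneg ((2:ℝ)^m - 2)) hL.le, hL.le]

private lemma merge_step {X : Type*} [MetricSpace X] [Fintype X] [DecidableEq X]
    (L : ℝ) (hL : 0 < L) (c : X → X) (ρ : X → ℝ)
    (hidem : ∀ x, c (c x) = c x)
    (hcov : ∀ x, dist x (c x) ≤ ρ (c x))
    (hbd : ∀ s, c s = s →
      ρ s ≤ ((2:ℝ) ^ ((univ.filter (fun x => c x = s)).card + 1) - 4) * L)
    (s s' : X) (hs : c s = s) (hs' : c s' = s') (hne : s ≠ s')
    (hρ : ρ s' ≤ ρ s)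
    (hd : dist s s' ≤ 2 * max (ρ s) L + 2 * max (ρ s') L) :
    ∃ (c' : X → X) (ρ' : X → ℝ),
      (∀ x, c' (c' x) = c' x) ∧
      (∀ x, dist x (c' x) ≤ ρ' (c' x)) ∧
      (∀ t, c' t = t →
        ρ' t ≤ ((2:ℝ) ^ ((univ.filter (fun x => c' x = t)).card + 1) - 4) * L) ∧
      univ.image c' ⊆ (univ.image c).erase s' := by
  have hnn : ∀ t, c t = t → 0 ≤ ρ t := by
    intro t ht
    have := hcov t
    rwa [ht, dist_self] at this
  have hρs0 : 0 ≤ ρ s := hnn s hs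
  have hρs'0 : 0 ≤ ρ s' := hnn s' hs'
  have hmaxs : max (ρ s) L ≤ ρ s + L :=
    max_le (le_add_of_nonneg_right hL.le) (le_add_of_nonneg_left hρs0)
  have hmaxs' : max (ρ s') L ≤ ρ s' + L :=
    max_le (le_add_of_nonneg_right hL.le) (le_add_of_nonneg_left hρs'0)
  have hd' : dist s' s ≤ 2*ρ s + 2*ρ s' + 4*L := by
    rw [dist_comm]; linarith
  set c' : X → X := fun x => if c x = s' then s else c x with hc'
  set ρ' : X → ℝ := fun t => if t = s then 2*ρ s + 3*ρ s' + 4*L else ρ t with hρ'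
  have hc'x1 : ∀ x, c x = s' → c' x = s := by intro x h; simp [hc', h]
  have hc'x2 : ∀ x, c x ≠ s' → c' x = c x := by intro x h; simp [hc', h]
  have hc's : c' s = s := by rw [hc'x2 s (by rw [hs]; exact hne), hs]
  have hρ's : ρ' s = 2*ρ s + 3*ρ s' + 4*L := by simp [hρ']
  have hρ't : ∀ t, t ≠ s → ρ' t = ρ t := by intro t h; simp [hρ', h]
  refine ⟨c', ρ', ?_, ?_, ?_, ?_⟩
  · -- idempotent
    intro x
    by_cases h : c x = s'
    · rw [hc'x1 x h, hc's]
    · rw [hc'x2 x h, hc'x2 (c x) (by rw [hidem x]; exact h)]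
      exact hidem x
  · -- coverage
    intro x
    by_cases h : c x = s'
    · rw [hc'x1 x h, hρ's]
      have h1 : dist x s' ≤ ρ s' := by
        have := hcov x; rwa [h] at this
      have h2 := dist_triangle x s' s
      linarith
    · rw [hc'x2 x h]
      by_cases h2 : c x = s
      · rw [h2, hρ's]
        have := hcov x; rw [h2] at this
        linarith
      · rw [hρ't _ h2]; exact hcov x
  · -- bound
    intro t ht
    by_cases hts : t = s
    · subst hts
      have hiff : ∀ x, c' x = t ↔ (c x = t ∨ c x = s') := by
        intro x
        by_cases h : c x = s'
        · simp [hc'x1 x h, h]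
        · rw [hc'x2 x h]; simp [h]
      have hfil : univ.filter (fun x => c' x = t)
          = univ.filter (fun x => c x = t) ∪ univ.filter (fun x => c x = s') := by
        rw [← filter_or]
        exact filter_congr (fun x _ => by rw [hiff x])
      have hdisj : Disjoint (univ.filter (fun x => c x = t))
          (univ.filter (fun x => c x = s')) := by
        rw [disjoint_filter]
        intro x _ h1 h2
        exact hne (h1 ▸ h2 ▸ rfl)
      have hcards : (univ.filter (fun x => c' x = t)).card
          = (univ.filter (fun x => c x = t)).card
            + (univ.filter (fun x => c x = s')).card := by
        rw [hfil, card_union_of_disjoint hdisj]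
      rw [hρ's, hcards]
      have hm : 1 ≤ (univ.filter (fun x => c x = t)).card :=
        card_pos.mpr ⟨t, mem_filter.mpr ⟨mem_univ t, hs⟩⟩
      have hm' : 1 ≤ (univ.filter (fun x => c x = s')).card :=
        card_pos.mpr ⟨s', mem_filter.mpr ⟨mem_univ s', hs'⟩⟩
      exact key_ineq L (ρ t) (ρ s') hL _ _ hm hm' hρs'0 hρ (hbd t hs) (hbd s' hs')
    · -- t ≠ s
      have hct : c t = t := by
        by_cases h : c t = s'
        · exact absurd (hc'x1 t h ▸ ht : s = t) (fun e => hts e.symm)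
        · rwa [hc'x2 t h] at ht
      have hts' : t ≠ s' := by
        intro e
        subst e
        exact hne (ht.symm.trans (hc'x1 t hs')).symm
      have hfil : univ.filter (fun x => c' x = t) = univ.filter (fun x => c x = t) := by
        apply filter_congr
        intro x _
        constructor
        · intro h
          by_cases h1 : c x = s'
          · exact absurd (hc'x1 x h1 ▸ h : s = t) (fun e => hts e.symm)
          · rwa [hc'x2 x h1] at h
        · intro h
          have h1 : c x ≠ s' := by rw [h]; exact hts'
          rw [hc'x2 x h1]; exact h
      rw [hρ't t hts, hfil]
      exact hbd t hct
  · -- image subset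
    intro t ht
    obtain ⟨x, -, rfl⟩ := mem_image.mp ht
    by_cases h : c x = s'
    · rw [hc'x1 x h]
      exact mem_erase.mpr ⟨hne, mem_image.mpr ⟨s, mem_univ s, hs⟩⟩
    · rw [hc'x2 x h]
      exact mem_erase.mpr ⟨h, mem_image.mpr ⟨x, mem_univ x, rfl⟩⟩

private lemma cluster_aux {X : Type*} [MetricSpace X] [Fintype X] [DecidableEq X]
    (L : ℝ) (hL : 0 < L) :
    ∀ (n : ℕ) (c : X → X) (ρ : X → ℝ),
      (univ.image c).card ≤ n →
      (∀ x, c (c x) = c x) →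
      (∀ x, dist x (c x) ≤ ρ (c x)) →
      (∀ s, c s = s →
        ρ s ≤ ((2:ℝ) ^ ((univ.filter (fun x => c x = s)).card + 1) - 4) * L) →
      ∃ (S : Finset X) (r : X → ℝ),
        (∀ s ∈ S, L ≤ r s ∧ r s ≤ 4 ^ (Fintype.card X - 1) * L) ∧
        (∀ s ∈ S, ∀ s' ∈ S, s ≠ s' → 2 * r s + 2 * r s' < dist s s') ∧
        (∀ x : X, ∃! s : X, s ∈ S ∧ dist x s ≤ r s) := by
  intro n
  induction n with
  | zero =>
    intro c ρ hcard _ _ _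
    have h0 : univ.image c = ∅ := card_eq_zero.mp (Nat.le_zero.mp hcard)
    have hX : (univ : Finset X) = ∅ := image_eq_empty.mp h0
    refine ⟨∅, fun _ => L, by simp, by simp, ?_⟩
    intro x
    exact absurd (mem_univ x) (by simp [hX])
  | succ n ih =>
    intro c ρ hcard hidem hcov hbd
    by_cases hviol : ∃ s s', c s = s ∧ c s' = s' ∧ s ≠ s' ∧
        dist s s' ≤ 2 * max (ρ s) L + 2 * max (ρ s') L
    · obtain ⟨s, s', hs, hs', hne, hd⟩ := hviol
      have hs'mem : s' ∈ univ.image c := mem_image.mpr ⟨s', mem_univ s', hs'⟩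
      have hsmem : s ∈ univ.image c := mem_image.mpr ⟨s, mem_univ s, hs⟩
      have hpos : 1 ≤ (univ.image c).card := card_pos.mpr ⟨s, hsmem⟩
      rcases le_total (ρ s') (ρ s) with hle | hle
      · obtain ⟨c', ρ', h1, h2, h3, h4⟩ :=
          merge_step L hL c ρ hidem hcov hbd s s' hs hs' hne hle hd
        refine ih c' ρ' ?_ h1 h2 h3
        calc (univ.image c').card ≤ ((univ.image c).erase s').card := card_le_card h4
          _ = (univ.image c).card - 1 := card_erase_of_mem hs'mem
          _ ≤ n := by omega
      · obtain ⟨c', ρ', h1, h2, h3, h4⟩ :=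
          merge_step L hL c ρ hidem hcov hbd s' s hs' hs hne.symm hle
            (by rw [dist_comm]; linarith)
        refine ih c' ρ' ?_ h1 h2 h3
        calc (univ.image c').card ≤ ((univ.image c).erase s).card := card_le_card h4
          _ = (univ.image c).card - 1 := card_erase_of_mem hsmem
          _ ≤ n := by omega
    · -- terminal
      have hsep : ∀ s s', c s = s → c s' = s' → s ≠ s' →
          2 * max (ρ s) L + 2 * max (ρ s') L < dist s s' := by
        intro s s' h1 h2 h3
        exact not_le.mp (fun hle => hviol ⟨s, s', h1, h2, h3, hle⟩)
      have hfix : ∀ s ∈ univ.image c, c s = s := by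
        intro s hsm
        obtain ⟨x, -, rfl⟩ := mem_image.mp hsm
        exact hidem x
      refine ⟨univ.image c, fun t => max (ρ t) L, ?_, ?_, ?_⟩
      · intro s hsm
        refine ⟨le_max_right _ _, ?_⟩
        have hN : 1 ≤ Fintype.card X := Fintype.card_pos_iff.mpr ⟨s⟩
        have hone : (1:ℝ) ≤ 4 ^ (Fintype.card X - 1) := one_le_pow₀ (by norm_num)
        apply max_le
        · have hm : 1 ≤ (univ.filter (fun x => c x = s)).card :=
            card_pos.mpr ⟨s, mem_filter.mpr ⟨mem_univ s, hfix s hsm⟩⟩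
          have hmN : (univ.filter (fun x => c x = s)).card ≤ Fintype.card X := by
            simpa using card_filter_le univ (fun x => c x = s)
          calc ρ s ≤ ((2:ℝ) ^ ((univ.filter (fun x => c x = s)).card + 1) - 4) * L :=
              hbd s (hfix s hsm)
            _ ≤ 4 ^ (Fintype.card X - 1) * L :=
              mul_le_mul_of_nonneg_right (psi_le _ _ hm hmN) hL.le
        · nlinarith [hL.le]
      · intro s hsm s' hs'm hne
        exact hsep s s' (hfix s hsm) (hfix s' hs'm) hne
      · intro x
        refine ⟨c x, ⟨mem_image.mpr ⟨x, mem_univ x, rfl⟩,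
          (hcov x).trans (le_max_left _ _)⟩, ?_⟩
        rintro y ⟨hym, hyd⟩
        by_contra hne
        have hlt := hsep y (c x) (hfix y hym) (hidem x) hne
        have h1 : dist y (c x) ≤ dist y x + dist x (c x) := dist_triangle y x (c x)
        have h2 : dist y x ≤ max (ρ y) L := by rw [dist_comm]; exact hyd
        have h3 : dist x (c x) ≤ max (ρ (c x)) L := (hcov x).trans (le_max_left _ _)
        have h4 : L ≤ max (ρ y) L := le_max_right _ _
        have h5 : L ≤ max (ρ (c x)) L := le_max_right _ _
        linarith

/-- Clustering Lemma: in a finite metric space `X` of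
cardinality `N`, for every `L > 0` there are a subset `S ⊆ X` and radii `r_s`
with `L ≤ r_s ≤ 4^{N-1} L`, points of `S` are far apart
(`d(s,s') > 2r_s + 2r_{s'}` for `s ≠ s'`), and every `x ∈ X` lies within
distance `r_s` of a unique `s ∈ S`. -/
theorem statement9 (X : Type*) [MetricSpace X] [Fintype X] (L : ℝ) (hL : 0 < L) :
    ∃ (S : Finset X) (r : X → ℝ),
      (∀ s ∈ S, L ≤ r s ∧ r s ≤ 4 ^ (Fintype.card X - 1) * L) ∧
      (∀ s ∈ S, ∀ s' ∈ S, s ≠ s' → 2 * r s + 2 * r s' < dist s s') ∧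
      (∀ x : X, ∃! s : X, s ∈ S ∧ dist x s ≤ r s) := by
  classical
  apply cluster_aux L hL (Fintype.card X) id (fun _ => 0)
  · simpa using (card_le_univ (univ.image id))
  · intro x; rfl
  · intro x; simp
  · intro s _
    have : (univ.filter (fun x => id x = s)) = {s} := by
      ext x; simp
    rw [this]
    norm_num
end

section
/- (Sublevel Set Lemma) For every d ∈ ℕ there is a constant K_d ≥ 1 such that: for every nonzero polynomial P ∈ ℂ[z] of degree d whose leading coefficient has modulus A, there exist a subset R of the set of roots of P and radii {r_ζ}_{ζ∈R} with the properties: (1) r_ζ ≤ K_d · A^{-1/(d+1)} for every ζ ∈ R; (2) |P(w)| ≤ K_d · r_ζ^{-1} for every ζ ∈ R and every w ∈ D(ζ, 4r_ζ); (3) |P(w)| ≥ K_d^{-1} · A^{1/(d+1)} for every w ∈ ℂ ∖ ⋃_{ζ∈R} D(ζ, 2r_ζ). -/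
open Polynomial

noncomputable section

/-- norm of a multiset product in ℂ. -/
lemma aux_norm_multiset_prod (s : Multiset ℂ) :
    ‖s.prod‖ = (s.map fun z => ‖z‖).prod := by
  induction s using Multiset.induction with
  | empty => simp
  | cons a s ih => simp [norm_mul, ih]

lemma aux_prod_nonneg {s : Multiset ℂ} {f : ℂ → ℝ} (h : ∀ x ∈ s, 0 ≤ f x) :
    0 ≤ (s.map f).prod := by
  induction s using Multiset.induction with
  | empty => simp
  | cons a s ih =>
    simp only [Multiset.map_cons, Multiset.prod_cons]
    exact mul_nonneg (h a (by simp)) (ih fun x hx => h x (Multiset.mem_cons_of_mem hx))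

lemma aux_prod_le_prod {s : Multiset ℂ} {f g : ℂ → ℝ}
    (h0 : ∀ x ∈ s, 0 ≤ f x) (h : ∀ x ∈ s, f x ≤ g x) :
    (s.map f).prod ≤ (s.map g).prod := by
  induction s using Multiset.induction with
  | empty => simp
  | cons a s ih =>
    simp only [Multiset.map_cons, Multiset.prod_cons]
    have h0' : ∀ x ∈ s, 0 ≤ f x := fun x hx => h0 x (Multiset.mem_cons_of_mem hx)
    have hp : (s.map f).prod ≤ (s.map g).prod :=
      ih h0' fun x hx => h x (Multiset.mem_cons_of_mem hx)
    have hfa : 0 ≤ f a := h0 a (by simp)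
    exact mul_le_mul (h a (by simp)) hp (aux_prod_nonneg h0')
      (le_trans hfa (h a (by simp)))

lemma aux_prod_map_mul_const (s : Multiset ℂ) (f : ℂ → ℝ) (c : ℝ) :
    (s.map fun x => f x * c).prod = (s.map f).prod * c ^ Multiset.card s := by
  induction s using Multiset.induction with
  | empty => simp
  | cons a s ih =>
    simp only [Multiset.map_cons, Multiset.prod_cons, ih, Multiset.card_cons]
    ring

/-- Sublevel Set Lemma: for every degree `d` there is a
constant `K_d ≥ 1` such that every nonzero polynomial `P` of degree `d` with
leading coefficient of modulus `A` admits a set `R` of roots and positive radii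
`r_ζ ≤ K_d A^{-1/(d+1)}` with `|P| ≤ K_d r_ζ⁻¹` on `D(ζ, 4r_ζ)` and
`|P| ≥ K_d⁻¹ A^{1/(d+1)}` outside `⋃_{ζ∈R} D(ζ, 2r_ζ)`. -/
theorem statement10 (d : ℕ) :
    ∃ K : ℝ, 1 ≤ K ∧
      ∀ P : Polynomial ℂ, P ≠ 0 → P.natDegree = d →
        ∃ (R : Finset ℂ) (rad : ℂ → ℝ),
          (∀ ζ ∈ R, P.IsRoot ζ) ∧
          (∀ ζ ∈ R, 0 < rad ζ ∧ rad ζ ≤ K * ‖P.leadingCoeff‖ ^ (-(1 / ((d : ℝ) + 1)))) ∧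
          (∀ ζ ∈ R, ∀ w ∈ Metric.ball ζ (4 * rad ζ), ‖P.eval w‖ ≤ K * (rad ζ)⁻¹) ∧
          (∀ w : ℂ, (∀ ζ ∈ R, w ∉ Metric.ball ζ (2 * rad ζ)) →
            K⁻¹ * ‖P.leadingCoeff‖ ^ (1 / ((d : ℝ) + 1)) ≤ ‖P.eval w‖) := by
  refine ⟨6 ^ d, one_le_pow₀ (by norm_num), ?_⟩
  intro P hP hdeg
  set A : ℝ := ‖P.leadingCoeff‖ with hAdef
  have hA0 : 0 < A := norm_pos_iff.mpr (leadingCoeff_ne_zero.mpr hP)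
  have hx : (0:ℝ) < (d:ℝ) + 1 := by positivity
  set ρ : ℝ := A ^ (-(1 / ((d : ℝ) + 1))) with hρdef
  have hρ0 : 0 < ρ := Real.rpow_pos_of_pos hA0 _
  -- splits and roots facts
  have hsplit : Splits P := IsAlgClosed.splits P
  have hcard : Multiset.card P.roots = d := by
    rw [← hdeg, hsplit.natDegree_eq_card_roots]
  -- evaluation formula
  have heval : ∀ w : ℂ, ‖P.eval w‖ = A * (P.roots.map fun ζ => ‖w - ζ‖).prod := by
    intro w
    conv_lhs => rw [hsplit.eq_prod_roots]
    rw [eval_mul, eval_C, norm_mul, eval_multiset_prod, Multiset.map_map,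
      aux_norm_multiset_prod, Multiset.map_map]
    congr 1
    congr 1
    apply Multiset.map_congr rfl
    intro a _
    simp
  -- key identity A * ρ ^ (d+1) = 1
  have hkey : A * ρ ^ (d + 1) = 1 := by
    have h1 : ρ ^ (d + 1) = A ^ (-(1:ℝ)) := by
      rw [hρdef, ← Real.rpow_natCast (A ^ (-(1 / ((d:ℝ) + 1)))) (d+1),
        ← Real.rpow_mul hA0.le]
      congr 1
      push_cast
      field_simp
    rw [h1, Real.rpow_neg_one, mul_inv_cancel₀ (ne_of_gt hA0)]
  -- the balance function
  set H : ℂ → ℝ → ℝ :=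
    fun ζ r => A * ((P.roots.map fun ζ' => ‖ζ - ζ'‖ + 4 * r).prod) * r with hHdef
  have hHcont : ∀ ζ, Continuous (H ζ) := by
    intro ζ
    apply Continuous.mul
    · apply Continuous.mul continuous_const
      exact continuous_multiset_prod P.roots
        (fun ζ' _ => by continuity)
    · exact continuous_id
  -- existence of radii
  have hex : ∀ ζ : ℂ, ∃ r : ℝ, ζ ∈ P.roots.toFinset →
      (0 < r ∧ r ≤ ρ ∧ H ζ r = 1) := by
    intro ζ
    by_cases hζ : ζ ∈ P.roots.toFinset
    swap
    · exact ⟨1, fun h => absurd h hζ⟩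
    have h0 : H ζ 0 = 0 := by simp [hHdef]
    have h1 : 1 ≤ H ζ ρ := by
      have hge : ρ ^ d ≤ (P.roots.map fun ζ' => ‖ζ - ζ'‖ + 4 * ρ).prod := by
        have := aux_prod_le_prod (s := P.roots) (f := fun _ => ρ)
          (g := fun ζ' => ‖ζ - ζ'‖ + 4 * ρ)
          (fun x _ => hρ0.le)
          (fun x _ => by have := norm_nonneg (ζ - x); linarith)
        rwa [Multiset.map_const', Multiset.prod_replicate, hcard] at this
      have : A * ρ ^ d * ρ ≤ H ζ ρ := by
        have : A * ρ ^ d ≤ A * (P.roots.map fun ζ' => ‖ζ - ζ'‖ + 4 * ρ).prod :=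
          mul_le_mul_of_nonneg_left hge hA0.le
        exact mul_le_mul_of_nonneg_right this hρ0.le
      calc (1:ℝ) = A * ρ ^ (d + 1) := hkey.symm
        _ = A * ρ ^ d * ρ := by rw [pow_succ, mul_assoc]
        _ ≤ H ζ ρ := this
    have hmem : (1:ℝ) ∈ Set.Icc (H ζ 0) (H ζ ρ) := ⟨by rw [h0]; norm_num, h1⟩
    obtain ⟨r, hrI, hHr⟩ :=
      intermediate_value_Icc hρ0.le (hHcont ζ).continuousOn hmem
    refine ⟨r, fun _ => ⟨?_, hrI.2, hHr⟩⟩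
    rcases lt_or_eq_of_le hrI.1 with h | h
    · exact h
    · exfalso; rw [← h] at hHr; rw [h0] at hHr; norm_num at hHr
  choose rad hrad using hex
  refine ⟨P.roots.toFinset, rad, ?_, ?_, ?_, ?_⟩
  · intro ζ hζ
    exact isRoot_of_mem_roots (Multiset.mem_toFinset.mp hζ)
  · intro ζ hζ
    obtain ⟨hr0, hrρ, _⟩ := hrad ζ hζ
    refine ⟨hr0, ?_⟩
    calc rad ζ ≤ ρ := hrρ
      _ = 1 * ρ := (one_mul ρ).symm
      _ ≤ 6 ^ d * ρ := by
          apply mul_le_mul_of_nonneg_right _ hρ0.le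
          exact one_le_pow₀ (by norm_num)
  · intro ζ hζ w hw
    obtain ⟨hr0, hrρ, hHr⟩ := hrad ζ hζ
    have hwd : ‖w - ζ‖ ≤ 4 * rad ζ := by
      rw [Metric.mem_ball, dist_eq_norm] at hw
      exact hw.le
    have hfac : ∀ ζ' ∈ P.roots, ‖w - ζ'‖ ≤ ‖ζ - ζ'‖ + 4 * rad ζ := by
      intro ζ' _
      have : ‖w - ζ'‖ ≤ ‖w - ζ‖ + ‖ζ - ζ'‖ := by
        have := norm_add_le (w - ζ) (ζ - ζ')
        simpa using this
      linarith
    have hle : ‖P.eval w‖ ≤ A * (P.roots.map fun ζ' => ‖ζ - ζ'‖ + 4 * rad ζ).prod := by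
      rw [heval w]
      exact mul_le_mul_of_nonneg_left
        (aux_prod_le_prod (fun x _ => norm_nonneg _) hfac) hA0.le
    have hAP : A * (P.roots.map fun ζ' => ‖ζ - ζ'‖ + 4 * rad ζ).prod = (rad ζ)⁻¹ := by
      have : A * (P.roots.map fun ζ' => ‖ζ - ζ'‖ + 4 * rad ζ).prod * rad ζ = 1 := hHr
      field_simp at this ⊢
      linarith [this]
    calc ‖P.eval w‖ ≤ (rad ζ)⁻¹ := by rw [← hAP]; exact hle
      _ = 1 * (rad ζ)⁻¹ := (one_mul _).symm
      _ ≤ 6 ^ d * (rad ζ)⁻¹ := by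
          apply mul_le_mul_of_nonneg_right _ (inv_nonneg.mpr hr0.le)
          exact one_le_pow₀ (by norm_num)
  · intro w hw
    have hρinv : A ^ (1 / ((d:ℝ) + 1)) = ρ⁻¹ := by
      rw [hρdef, Real.rpow_neg hA0.le, inv_inv]
    rcases P.roots.toFinset.eq_empty_or_nonempty with hne | hne
    · -- no roots: d = 0
      have hroots0 : P.roots = 0 := by
        rwa [← Multiset.toFinset_eq_empty]
      have hd0 : d = 0 := by rw [← hcard, hroots0]; rfl
      subst hd0
      have : ‖P.eval w‖ = A := by rw [heval w, hroots0]; simp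
      rw [this, hρinv]
      have : ρ = A⁻¹ := by
        rw [hρdef]
        norm_num
        rw [Real.rpow_neg_one]
      rw [this, inv_inv]
      simp
    · obtain ⟨ζ₀, hζ₀R, hmin⟩ := Finset.exists_min_image _ (fun ζ => ‖w - ζ‖) hne
      obtain ⟨hr0, hrρ, hHr⟩ := hrad ζ₀ hζ₀R
      have hs : 2 * rad ζ₀ ≤ ‖w - ζ₀‖ := by
        have := hw ζ₀ hζ₀R
        rw [Metric.mem_ball, dist_eq_norm, not_lt] at this
        exact this
      have hfac : ∀ ζ' ∈ P.roots,
          (‖ζ₀ - ζ'‖ + 4 * rad ζ₀) * 6⁻¹ ≤ ‖w - ζ'‖ := by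
        intro ζ' hζ'
        have h1 : ‖w - ζ₀‖ ≤ ‖w - ζ'‖ := hmin ζ' (Multiset.mem_toFinset.mpr hζ')
        have h2 : ‖ζ₀ - ζ'‖ - ‖w - ζ₀‖ ≤ ‖w - ζ'‖ := by
          have := norm_add_le (ζ₀ - w) (w - ζ')
          have hrev : ‖ζ₀ - w‖ = ‖w - ζ₀‖ := norm_sub_rev _ _
          simp only [sub_add_sub_cancel] at this
          linarith
        rcases le_or_gt ‖ζ₀ - ζ'‖ (4 * ‖w - ζ₀‖) with h | h
        · linarith
        · linarith
      have hge : A * ((P.roots.map fun ζ' => ‖ζ₀ - ζ'‖ + 4 * rad ζ₀).prod * 6⁻¹ ^ d)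
          ≤ ‖P.eval w‖ := by
        rw [heval w]
        apply mul_le_mul_of_nonneg_left _ hA0.le
        have := aux_prod_le_prod (s := P.roots)
          (f := fun ζ' => (‖ζ₀ - ζ'‖ + 4 * rad ζ₀) * 6⁻¹)
          (g := fun ζ' => ‖w - ζ'‖)
          (fun x _ => by positivity) hfac
        rwa [aux_prod_map_mul_const, hcard] at this
      have hAP : A * (P.roots.map fun ζ' => ‖ζ₀ - ζ'‖ + 4 * rad ζ₀).prod = (rad ζ₀)⁻¹ := by
        have h1 : A * (P.roots.map fun ζ' => ‖ζ₀ - ζ'‖ + 4 * rad ζ₀).prod * rad ζ₀ = 1 := hHr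
        field_simp at h1 ⊢
        linarith [h1]
      rw [hρinv]
      have hfin : (6:ℝ) ^ d * ((6:ℝ)⁻¹ : ℝ) ^ d = 1 := by
        rw [← mul_pow]; norm_num
      have hinv : ρ⁻¹ ≤ (rad ζ₀)⁻¹ := by
        apply inv_anti₀ hr0 hrρ
      calc ((6:ℝ) ^ d)⁻¹ * ρ⁻¹ ≤ ((6:ℝ) ^ d)⁻¹ * (rad ζ₀)⁻¹ := by
            apply mul_le_mul_of_nonneg_left hinv (by positivity)
        _ = (rad ζ₀)⁻¹ * 6⁻¹ ^ d := by rw [inv_pow]; ring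
        _ = A * (P.roots.map fun ζ' => ‖ζ₀ - ζ'‖ + 4 * rad ζ₀).prod * 6⁻¹ ^ d := by
            rw [hAP]
        _ = A * ((P.roots.map fun ζ' => ‖ζ₀ - ζ'‖ + 4 * rad ζ₀).prod * 6⁻¹ ^ d) := by
            ring
        _ ≤ ‖P.eval w‖ := hge
end
end

section
/- (Existence of approximate minimal eigenvector fields) Let U ⊆ ℂⁿ be open, p ∈ U, and let F = (F₁,…,Fₙ) : U → ℂⁿ be holomorphic. Set φ = Σ_{ℓ=1}^n |F_ℓ|², let H(z) = (∂²φ/∂z̄_j∂z_k)_{j,k=1}^n be its Levi form and λ₁(z) its minimal eigenvalue. If the kernel of H(p) is one-dimensional, then there exist an open neighborhood V ⊆ U of p, a holomorphic map X : V → ℂⁿ with X(p) ≠ 0, and a constant C > 0 such that (H(z)X(z), X(z)) ≤ C · λ₁(z) for every z ∈ V, where (·,·) is the standard Hermitian product of ℂⁿ. -/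
open MeasureTheory Complex

noncomputable section

/-- Wirtinger derivative `∂/∂z_j` of a function `f : ℂⁿ → ℂ`. -/
def wder {n : ℕ} (j : Fin n) (f : (Fin n → ℂ) → ℂ) (z : Fin n → ℂ) : ℂ :=
  (1 / 2 : ℂ) * (fderiv ℝ f z (Pi.single j 1) -
    Complex.I * fderiv ℝ f z (Pi.single j Complex.I))

/-- Wirtinger derivative `∂/∂z̄_j` of a function `f : ℂⁿ → ℂ`. -/
def wderBar {n : ℕ} (j : Fin n) (f : (Fin n → ℂ) → ℂ) (z : Fin n → ℂ) : ℂ :=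
  (1 / 2 : ℂ) * (fderiv ℝ f z (Pi.single j 1) +
    Complex.I * fderiv ℝ f z (Pi.single j Complex.I))

/-- The Levi form (complex Hessian) `H(z) = (∂²φ/∂z̄_j∂z_k)_{j,k}` of `φ : ℂⁿ → ℝ`. -/
def levi {n : ℕ} (φ : (Fin n → ℂ) → ℝ) (z : Fin n → ℂ) : Matrix (Fin n) (Fin n) ℂ :=
  Matrix.of fun j k => wderBar j (wder k fun w => (φ w : ℂ)) z

/-- The Hermitian form `(H(z)v, v) = Σ_{j,k} H_{jk} v_k conj(v_j)`. -/
def leviQ {n : ℕ} (φ : (Fin n → ℂ) → ℝ) (z : Fin n → ℂ) (v : Fin n → ℂ) : ℂ :=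
  ∑ j, ∑ k, levi φ z j k * v k * (starRingEnd ℂ) (v j)

/-- Minimal eigenvalue `λ₁(z)` of the Levi form, described via the Rayleigh quotient. -/
def lambdaMin {n : ℕ} (φ : (Fin n → ℂ) → ℝ) (z : Fin n → ℂ) : ℝ :=
  sInf {r : ℝ | ∃ v : Fin n → ℂ, ∑ j, Complex.normSq (v j) = 1 ∧ r = (leviQ φ z v).re}


namespace S12


variable {n : ℕ}

def cj : ℂ →L[ℝ] ℂ := Complex.conjCLE.toContinuousLinearMap

@[simp] lemma cj_apply (x : ℂ) : cj x = (starRingEnd ℂ) x := rfl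

lemma single_I (j : Fin n) : (Pi.single j Complex.I : Fin n → ℂ) = Complex.I • (Pi.single j 1 : Fin n → ℂ) := by
  ext k
  rcases eq_or_ne k j with rfl | hk
  · simp
  · simp [Pi.single_eq_of_ne hk]

lemma key_wder {f : (Fin n → ℂ) → ℂ} {z : Fin n → ℂ} (L M : (Fin n → ℂ) →L[ℂ] ℂ)
    (h : HasFDerivAt f (L.restrictScalars ℝ + cj.comp (M.restrictScalars ℝ)) z) (j : Fin n) :
    wder j f z = L (Pi.single j 1) ∧ wderBar j f z = (starRingEnd ℂ) (M (Pi.single j 1)) := by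
  have hd := h.fderiv
  rw [wder, wderBar, hd]
  have e1 : (L.restrictScalars ℝ + cj.comp (M.restrictScalars ℝ)) (Pi.single j 1)
      = L (Pi.single j 1) + (starRingEnd ℂ) (M (Pi.single j 1)) := by
    simp
  have e2 : (L.restrictScalars ℝ + cj.comp (M.restrictScalars ℝ)) (Pi.single j Complex.I)
      = Complex.I * L (Pi.single j 1) -
        Complex.I * (starRingEnd ℂ) (M (Pi.single j 1)) := by
    simp only [ContinuousLinearMap.add_apply, ContinuousLinearMap.coe_restrictScalars',
      ContinuousLinearMap.comp_apply, cj_apply, single_I j, _root_.map_smul, smul_eq_mul, _root_.map_mul,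
      Complex.conj_I]
    ring
  rw [e1, e2]
  constructor
  · have : Complex.I * (Complex.I * L (Pi.single j 1) -
        Complex.I * (starRingEnd ℂ) (M (Pi.single j 1)))
        = -(L (Pi.single j 1)) + (starRingEnd ℂ) (M (Pi.single j 1)) := by
      rw [mul_sub, ← mul_assoc, ← mul_assoc, Complex.I_mul_I]; ring
    rw [this]; ring
  · have : Complex.I * (Complex.I * L (Pi.single j 1) -
        Complex.I * (starRingEnd ℂ) (M (Pi.single j 1)))
        = -(L (Pi.single j 1)) + (starRingEnd ℂ) (M (Pi.single j 1)) := by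
      rw [mul_sub, ← mul_assoc, ← mul_assoc, Complex.I_mul_I]; ring
    rw [this]; ring


end S12

namespace S12

open Metric MeasureTheory intervalIntegral Set


variable {n : ℕ}

abbrev EE (n : ℕ) := Fin n → ℂ

lemma slice_hasDerivAt {f : EE n → ℂ} {x : EE n} (hx : DifferentiableAt ℂ f x) (v : EE n) :
    HasDerivAt (fun t : ℂ => f (x + t • v)) (fderiv ℂ f x v) 0 := by
  have hline : HasDerivAt (fun t : ℂ => x + t • v) v 0 := by
    simpa using (((hasDerivAt_id (0 : ℂ)).smul_const v).const_add x)
  have h := hx.hasFDerivAt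
  have h0 : x + (0 : ℂ) • v = x := by simp
  rw [← h0] at h
  have h2 := h.comp_hasDerivAt 0 hline
  rw [h0] at h2
  exact h2

lemma norm_dirDeriv_le {U : Set (EE n)} (hU : IsOpen U) {f : EE n → ℂ}
    (hf : DifferentiableOn ℂ f U) {x : EE n} {R M : ℝ} (hR : 0 < R)
    (hball : closedBall x R ⊆ U) (hM : ∀ y ∈ closedBall x R, ‖f y‖ ≤ M)
    {v : EE n} (hv : ‖v‖ ≤ 1) :
    ‖fderiv ℂ f x v‖ ≤ M / R := by
  set g : ℂ → ℂ := fun t => f (x + t • v) with hg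
  set S : Set ℂ := (fun t : ℂ => x + t • v) ⁻¹' U with hS
  have hcont : Continuous (fun t : ℂ => x + t • v) :=
    continuous_const.add (continuous_id.smul continuous_const)
  have hSopen : IsOpen S := hU.preimage hcont
  have hmem : ∀ t : ℂ, ‖t‖ ≤ R → x + t • v ∈ closedBall x R := by
    intro t ht
    simp only [mem_closedBall, dist_self_add_left, norm_smul]
    calc ‖t‖ * ‖v‖ ≤ R * 1 := by
          exact mul_le_mul ht hv (norm_nonneg _) hR.le
      _ = R := mul_one R
  have hsub : closedBall (0 : ℂ) R ⊆ S := by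
    intro t ht
    simp only [mem_closedBall, dist_zero_right] at ht
    exact hball (hmem t ht)
  have hgdiff : DifferentiableOn ℂ g S := by
    apply hf.comp
    · intro t ht
      exact ((differentiable_const x).add ((differentiable_id).smul_const v)).differentiableAt.differentiableWithinAt
    · exact fun t ht => ht
  have hxU : DifferentiableAt ℂ f x := by
    apply hf.differentiableAt (hU.mem_nhds (hball (mem_closedBall_self hR.le)))
  have hder : deriv g 0 = fderiv ℂ f x v := (slice_hasDerivAt hxU v).deriv
  have hcd : cderiv R g 0 = deriv g 0 := cderiv_eq_deriv hSopen hgdiff hR hsub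
  have hbd : ‖cderiv R g 0‖ ≤ M / R := by
    apply norm_cderiv_le hR
    intro t ht
    simp only [mem_sphere_iff_norm, sub_zero] at ht
    exact hM _ (hmem t (le_of_eq ht))
  rw [← hder, ← hcd]
  exact hbd

lemma norm_fderiv_le {U : Set (EE n)} (hU : IsOpen U) {f : EE n → ℂ}
    (hf : DifferentiableOn ℂ f U) {x : EE n} {R M : ℝ} (hR : 0 < R)
    (hball : closedBall x R ⊆ U) (hM : ∀ y ∈ closedBall x R, ‖f y‖ ≤ M) :
    ‖fderiv ℂ f x‖ ≤ n * (M / R) := by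
  have hM0 : 0 ≤ M := le_trans (norm_nonneg _) (hM x (mem_closedBall_self hR.le))
  apply ContinuousLinearMap.opNorm_le_bound _ (by positivity)
  intro u
  have hu : u = ∑ k, u k • (Pi.single k 1 : EE n) := by
    funext j
    simp [Pi.single_apply, eq_comm]
  calc ‖fderiv ℂ f x u‖ = ‖∑ k, u k • fderiv ℂ f x (Pi.single k 1)‖ := by
        conv_lhs => rw [hu]
        rw [map_sum]
        simp only [ContinuousLinearMap.map_smul]
  _ ≤ ∑ k, ‖u k • fderiv ℂ f x (Pi.single k 1)‖ := norm_sum_le _ _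
  _ ≤ ∑ k : Fin n, ‖u‖ * (M / R) := by
        apply Finset.sum_le_sum
        intro k _
        rw [norm_smul]
        have h1 : ‖fderiv ℂ f x (Pi.single k 1)‖ ≤ M / R := by
          apply norm_dirDeriv_le hU hf hR hball hM
          rw [Pi.norm_single]
          norm_num
        have h2 : ‖u k‖ ≤ ‖u‖ := norm_le_pi_norm u k
        exact mul_le_mul h2 h1 (norm_nonneg _) (norm_nonneg _)
  _ = n * (M / R) * ‖u‖ := by
        rw [Finset.sum_const, Finset.card_univ, Fintype.card_fin, nsmul_eq_mul]
        ring

lemma lipschitz_on {U : Set (EE n)} (hU : IsOpen U) {f : EE n → ℂ}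
    (hf : DifferentiableOn ℂ f U) {z₀ : EE n} {R M : ℝ} (hR : 0 < R)
    (hball : closedBall z₀ (4 * R) ⊆ U) (hM : ∀ y ∈ closedBall z₀ (4 * R), ‖f y‖ ≤ M)
    {x y : EE n} (hx : x ∈ ball z₀ (3 * R)) (hy : y ∈ ball z₀ (3 * R)) :
    ‖f x - f y‖ ≤ n * (M / R) * ‖x - y‖ := by
  have key : ∀ w ∈ ball z₀ (3 * R), closedBall w R ⊆ closedBall z₀ (4 * R) := by
    intro w hw u hu
    rw [mem_closedBall] at hu ⊢
    rw [mem_ball] at hw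
    calc dist u z₀ ≤ dist u w + dist w z₀ := dist_triangle _ _ _
      _ ≤ R + 3 * R := add_le_add hu hw.le
      _ = 4 * R := by ring
  have hdiff : ∀ w ∈ ball z₀ (3 * R),
      HasFDerivWithinAt f ((fderiv ℂ f w).restrictScalars ℝ) (ball z₀ (3 * R)) w := by
    intro w hw
    have : DifferentiableAt ℂ f w :=
      hf.differentiableAt (hU.mem_nhds ((key w hw) (mem_closedBall_self hR.le)
        |> fun h => hball h))
    exact (this.hasFDerivAt.restrictScalars ℝ).hasFDerivWithinAt
  have hbd : ∀ w ∈ ball z₀ (3 * R), ‖(fderiv ℂ f w).restrictScalars ℝ‖ ≤ n * (M / R) := by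
    intro w hw
    rw [ContinuousLinearMap.norm_restrictScalars]
    exact norm_fderiv_le hU hf hR (Set.Subset.trans (key w hw) hball)
      (fun y hy => hM y (key w hw hy))
  exact (convex_ball z₀ (3 * R)).norm_image_sub_le_of_norm_hasFDerivWithin_le
    hdiff hbd hy hx



open Real

variable {n : ℕ}

lemma dirDeriv_differentiableOn {U : Set (EE n)} (hU : IsOpen U) {f : EE n → ℂ}
    (hf : DifferentiableOn ℂ f U) {v : EE n} (hv : ‖v‖ ≤ 1) :
    DifferentiableOn ℂ (fun w => fderiv ℂ f w v) U := by
  intro z₀ hz₀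
  suffices h : DifferentiableAt ℂ (fun w => fderiv ℂ f w v) z₀ from h.differentiableWithinAt
  obtain ⟨δ, hδpos, hδsub⟩ : ∃ δ > 0, closedBall z₀ δ ⊆ U :=
    Metric.nhds_basis_closedBall.mem_iff.1 (hU.mem_nhds hz₀)
  set R : ℝ := δ / 4 with hRdef
  have hR : 0 < R := by positivity
  have h4R : closedBall z₀ (4 * R) ⊆ U := by
    have : 4 * R = δ := by rw [hRdef]; ring
    rw [this]; exact hδsub
  obtain ⟨M, hM⟩ : ∃ M, ∀ x ∈ closedBall z₀ (4 * R), ‖f x‖ ≤ M :=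
    (isCompact_closedBall z₀ (4 * R)).exists_bound_of_continuousOn
      (hf.continuousOn.mono h4R)
  have hM0 : 0 ≤ M := le_trans (norm_nonneg _)
    (hM z₀ (mem_closedBall_self (by positivity)))
  set c : ℝ → ℂ := fun θ => deriv (circleMap 0 R) θ * ((circleMap 0 R θ) ^ 2)⁻¹ with hc
  set F : EE n → ℝ → ℂ := fun w θ => c θ • f (w + circleMap 0 R θ • v) with hF
  set G : EE n → ℂ := fun w => ∫ θ in (0:ℝ)..(2 * π), F w θ with hG
  have hcm_ne : ∀ θ : ℝ, circleMap 0 R θ ≠ 0 := by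
    intro θ
    intro hzero
    have := norm_circleMap_zero R θ
    rw [hzero] at this
    simp only [norm_zero] at this
    have : R = 0 := by rwa [abs_of_pos hR, eq_comm] at this
    exact hR.ne' this
  have hshift : ∀ θ : ℝ, ‖circleMap 0 R θ • v‖ ≤ R := by
    intro θ
    rw [norm_smul]
    have h1 : ‖circleMap 0 R θ‖ = R := by
      rw [norm_circleMap_zero, abs_of_pos hR]
    rw [h1]
    calc R * ‖v‖ ≤ R * 1 := by exact mul_le_mul_of_nonneg_left hv hR.le
      _ = R := mul_one R
  have hmemb : ∀ w ∈ ball z₀ R, ∀ θ : ℝ, w + circleMap 0 R θ • v ∈ ball z₀ (3 * R) := by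
    intro w hw θ
    rw [mem_ball] at hw ⊢
    calc dist (w + circleMap 0 R θ • v) z₀ ≤ dist (w + circleMap 0 R θ • v) w + dist w z₀ :=
          dist_triangle _ _ _
      _ = ‖circleMap 0 R θ • v‖ + dist w z₀ := by rw [dist_self_add_left]
      _ < R + R := add_lt_add_of_le_of_lt (hshift θ) hw
      _ ≤ 3 * R := by linarith
  have hb3 : ball z₀ (3 * R) ⊆ U := by
    intro u hu
    apply h4R
    rw [mem_ball] at hu
    rw [mem_closedBall]
    nlinarith
  have hccont : Continuous c := by
    have h1 : c = fun θ => circleMap 0 R θ * Complex.I * ((circleMap 0 R θ) ^ 2)⁻¹ := by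
      funext θ; simp only [hc, deriv_circleMap]
    rw [h1]
    exact ((continuous_circleMap 0 R).mul continuous_const).mul
      (((continuous_circleMap 0 R).pow 2).inv₀ (fun θ => pow_ne_zero 2 (hcm_ne θ)))
  have hnormc : ∀ θ : ℝ, ‖c θ‖ = 1 / R := by
    intro θ
    rw [hc]
    simp only [deriv_circleMap, norm_mul, norm_inv, norm_pow,
      norm_circleMap_zero, abs_of_pos hR, Complex.norm_I]
    rw [sq]
    field_simp
  have hfc : ∀ w ∈ ball z₀ R, Continuous (fun θ => F w θ) := by
    intro w hw
    apply hccont.smul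
    apply (hf.continuousOn.mono hb3).comp_continuous
      (continuous_const.add ((continuous_circleMap 0 R).smul continuous_const))
    exact fun θ => hmemb w hw θ
  -- K1 : Cauchy formula
  have K1 : ∀ w ∈ ball z₀ R, fderiv ℂ f w v = (2 * π * Complex.I : ℂ)⁻¹ • G w := by
    intro w hw
    set g : ℂ → ℂ := fun t => f (w + t • v) with hg
    set S : Set ℂ := (fun t : ℂ => w + t • v) ⁻¹' U with hS
    have hSopen : IsOpen S :=
      hU.preimage (continuous_const.add (continuous_id.smul continuous_const))
    have hsub : closedBall (0 : ℂ) R ⊆ S := by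
      intro t ht
      simp only [mem_closedBall, dist_zero_right] at ht
      show w + t • v ∈ U
      apply hb3
      rw [mem_ball]
      calc dist (w + t • v) z₀ ≤ dist (w + t • v) w + dist w z₀ := dist_triangle _ _ _
        _ = ‖t • v‖ + dist w z₀ := by rw [dist_self_add_left]
        _ < R + R := by
            apply add_lt_add_of_le_of_lt _ (mem_ball.1 hw)
            rw [norm_smul]
            calc ‖t‖ * ‖v‖ ≤ R * 1 := mul_le_mul ht hv (norm_nonneg _) hR.le
              _ = R := mul_one R
        _ ≤ 3 * R := by linarith
    have hgdiff : DifferentiableOn ℂ g S := by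
      apply hf.comp
      · exact fun t ht => ((differentiable_const w).add
          ((differentiable_id).smul_const v)).differentiableAt.differentiableWithinAt
      · exact fun t ht => ht
    have hwU : w ∈ U := hb3 (by rw [mem_ball]; rw [mem_ball] at hw; nlinarith)
    have hder : deriv g 0 = fderiv ℂ f w v :=
      (slice_hasDerivAt (hf.differentiableAt (hU.mem_nhds hwU)) v).deriv
    have hcd : cderiv R g 0 = deriv g 0 := cderiv_eq_deriv hSopen hgdiff hR hsub
    rw [← hder, ← hcd]
    rw [Complex.cderiv]
    congr 1
    rw [circleIntegral]
    apply intervalIntegral.integral_congr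
    intro θ _
    simp only [hF, hc, sub_zero, smul_eq_mul]
    ring
  -- K2 : differentiability of the parametric integral
  have K2 : DifferentiableAt ℂ G z₀ := by
    set F' : ℝ → (EE n →L[ℂ] ℂ) :=
      fun θ => c θ • fderiv ℂ f (z₀ + circleMap 0 R θ • v) with hF'
    have hres := intervalIntegral.hasFDerivAt_integral_of_dominated_loc_of_lip
      (F := F) (F' := F') (x₀ := z₀) (a := (0:ℝ)) (b := 2 * π) (μ := volume)
      (bound := fun _ => (↑n * (M / R)) / R) (ball_mem_nhds z₀ hR)
      ?_ ?_ ?_ ?_ ?_ ?_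
    · exact hres.2.differentiableAt
    · filter_upwards [ball_mem_nhds z₀ hR] with w hw
      exact (hfc w hw).aestronglyMeasurable
    · exact (hfc z₀ (mem_ball_self hR)).intervalIntegrable _ _
    · apply AEStronglyMeasurable.smul hccont.aestronglyMeasurable
      have h1 : Measurable (fun θ : ℝ => fderiv ℂ f (z₀ + circleMap 0 R θ • v)) :=
        (measurable_fderiv ℂ f).comp
          (continuous_const.add ((continuous_circleMap 0 R).smul continuous_const)).measurable
      exact h1.aestronglyMeasurable
    · apply Filter.Eventually.of_forall
      intro θ _
      apply LipschitzOnWith.of_dist_le_mul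
      intro w hw w' hw'
      have ha : w + circleMap 0 R θ • v ∈ ball z₀ (3 * R) := hmemb w hw θ
      have hb : w' + circleMap 0 R θ • v ∈ ball z₀ (3 * R) := hmemb w' hw' θ
      have hlip := lipschitz_on hU hf hR h4R hM ha hb
      have harg : (w + circleMap 0 R θ • v) - (w' + circleMap 0 R θ • v) = w - w' := by
        abel
      rw [harg] at hlip
      calc dist (F w θ) (F w' θ)
          = ‖c θ‖ * ‖f (w + circleMap 0 R θ • v) - f (w' + circleMap 0 R θ • v)‖ := by
            rw [dist_eq_norm]
            simp only [hF]
            rw [← smul_sub, norm_smul]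
      _ ≤ (1 / R) * (↑n * (M / R) * ‖w - w'‖) := by
            rw [hnormc θ]
            exact mul_le_mul_of_nonneg_left hlip (by positivity)
      _ = (↑n * (M / R) / R) * dist w w' := by
            rw [dist_eq_norm]; ring
      _ ≤ ↑(Real.nnabs (↑n * (M / R) / R)) * dist w w' := by
            apply mul_le_mul_of_nonneg_right _ dist_nonneg
            rw [Real.coe_nnabs]
            exact le_abs_self _
    · exact intervalIntegrable_const
    · apply Filter.Eventually.of_forall
      intro θ _
      have hy : z₀ + circleMap 0 R θ • v ∈ U := hb3 (hmemb z₀ (mem_ball_self hR) θ)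
      have hfy : HasFDerivAt f (fderiv ℂ f (z₀ + circleMap 0 R θ • v))
          (z₀ + circleMap 0 R θ • v) :=
        (hf.differentiableAt (hU.mem_nhds hy)).hasFDerivAt
      have ht : HasFDerivAt (fun w : EE n => w + circleMap 0 R θ • v)
          (ContinuousLinearMap.id ℂ (EE n)) z₀ := (hasFDerivAt_id z₀).add_const _
      have hcomp := hfy.comp z₀ ht
      rw [ContinuousLinearMap.comp_id] at hcomp
      exact hcomp.const_smul (c θ)
  have heq : (fun w => fderiv ℂ f w v) =ᶠ[nhds z₀] fun w => (2 * π * Complex.I : ℂ)⁻¹ • G w := by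
    filter_upwards [ball_mem_nhds z₀ hR] with w hw using K1 w hw
  exact (K2.const_smul ((2 * π * Complex.I : ℂ)⁻¹)).congr_of_eventuallyEq heq


end S12

namespace S12

open Matrix

variable {n : ℕ}

/-- the complex Jacobian matrix of `F` at `z`. -/
def jac (F : (Fin n → ℂ) → Fin n → ℂ) (z : Fin n → ℂ) : Matrix (Fin n) (Fin n) ℂ :=
  Matrix.of fun ℓ k => fderiv ℂ (fun w => F w ℓ) z (Pi.single k 1)

section main

variable {U : Set (Fin n → ℂ)} {F : (Fin n → ℂ) → Fin n → ℂ}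

lemma comp_diff (hF : DifferentiableOn ℂ F U) (ℓ : Fin n) :
    DifferentiableOn ℂ (fun w => F w ℓ) U :=
  (ContinuousLinearMap.proj (R := ℂ) (φ := fun _ : Fin n => ℂ)
    ℓ).differentiable.comp_differentiableOn hF

lemma jac_diff (hU : IsOpen U) (hF : DifferentiableOn ℂ F U) (ℓ k : Fin n) :
    DifferentiableOn ℂ (fun w => jac F w ℓ k) U := by
  have h := dirDeriv_differentiableOn hU (comp_diff hF ℓ)
    (v := Pi.single k 1) (by rw [Pi.norm_single]; norm_num)
  exact h

lemma wder_phi (hU : IsOpen U) (hF : DifferentiableOn ℂ F U) {w : Fin n → ℂ} (hw : w ∈ U)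
    (k : Fin n) :
    wder k (fun u => ((∑ ℓ, Complex.normSq (F u ℓ) : ℝ) : ℂ)) w
      = ∑ ℓ, (starRingEnd ℂ) (F w ℓ) * jac F w ℓ k := by
  classical
  set L : (Fin n → ℂ) →L[ℂ] ℂ :=
    ∑ ℓ, (starRingEnd ℂ) (F w ℓ) • fderiv ℂ (fun u => F u ℓ) w with hL
  have hda : ∀ ℓ : Fin n, HasFDerivAt (fun u => F u ℓ) (fderiv ℂ (fun u => F u ℓ) w) w :=
    fun ℓ => ((comp_diff hF ℓ).differentiableAt (hU.mem_nhds hw)).hasFDerivAt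
  have hmain : HasFDerivAt (fun u => ((∑ ℓ, Complex.normSq (F u ℓ) : ℝ) : ℂ))
      (L.restrictScalars ℝ + cj.comp (L.restrictScalars ℝ)) w := by
    have hfun : (fun u => ((∑ ℓ, Complex.normSq (F u ℓ) : ℝ) : ℂ))
        = fun u => ∑ ℓ, F u ℓ * (starRingEnd ℂ) (F u ℓ) := by
      funext u
      rw [Complex.ofReal_sum]
      exact Finset.sum_congr rfl fun ℓ _ => (Complex.mul_conj (F u ℓ)).symm
    rw [hfun]
    have hterm : ∀ ℓ : Fin n, HasFDerivAt (fun u => F u ℓ * (starRingEnd ℂ) (F u ℓ))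
        (F w ℓ • (cj.comp ((fderiv ℂ (fun u => F u ℓ) w).restrictScalars ℝ)) +
          (starRingEnd ℂ) (F w ℓ) • ((fderiv ℂ (fun u => F u ℓ) w).restrictScalars ℝ)) w := by
      intro ℓ
      have haR := (hda ℓ).restrictScalars ℝ
      have hb : HasFDerivAt (fun u => (starRingEnd ℂ) (F u ℓ))
          (cj.comp ((fderiv ℂ (fun u => F u ℓ) w).restrictScalars ℝ)) w :=
        cj.hasFDerivAt.comp w haR
      exact haR.mul hb
    have hsum := HasFDerivAt.fun_sum (fun ℓ (_ : ℓ ∈ Finset.univ) => hterm ℓ)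
    refine HasFDerivAt.congr_fderiv hsum ?_
    symm
    ext v
    simp only [ContinuousLinearMap.add_apply, ContinuousLinearMap.coe_restrictScalars',
      ContinuousLinearMap.comp_apply, cj_apply, hL, ContinuousLinearMap.coe_sum',
      Finset.sum_apply, ContinuousLinearMap.coe_smul', Pi.smul_apply, smul_eq_mul, _root_.map_sum,
      _root_.map_mul, Complex.conj_conj, ContinuousLinearMap.add_apply]
    rw [← Finset.sum_add_distrib]
    exact Finset.sum_congr rfl fun ℓ _ => by ring
  have := (key_wder L L hmain k).1
  rw [this, hL]
  simp only [ContinuousLinearMap.coe_sum', Finset.sum_apply, ContinuousLinearMap.coe_smul',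
    Pi.smul_apply, smul_eq_mul]
  rfl

lemma levi_eq (hU : IsOpen U) (hF : DifferentiableOn ℂ F U) {z : Fin n → ℂ} (hz : z ∈ U) :
    levi (fun w => ∑ ℓ, Complex.normSq (F w ℓ)) z = (jac F z)ᴴ * jac F z := by
  classical
  ext j k
  show wderBar j (wder k fun w => (((∑ ℓ, Complex.normSq (F w ℓ) : ℝ)) : ℂ)) z = _
  set ψ : (Fin n → ℂ) → ℂ := fun w => ∑ ℓ, (starRingEnd ℂ) (F w ℓ) * jac F w ℓ k with hψ
  have hev : (wder k fun w => (((∑ ℓ, Complex.normSq (F w ℓ) : ℝ)) : ℂ)) =ᶠ[nhds z] ψ := by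
    filter_upwards [hU.mem_nhds hz] with w hw
    exact wder_phi hU hF hw k
  have hred : wderBar j (wder k fun w => (((∑ ℓ, Complex.normSq (F w ℓ) : ℝ)) : ℂ)) z
      = wderBar j ψ z := by
    rw [wderBar, wderBar, hev.fderiv_eq]
  rw [hred]
  set L2 : (Fin n → ℂ) →L[ℂ] ℂ :=
    ∑ ℓ, (starRingEnd ℂ) (F z ℓ) • fderiv ℂ (fun u => jac F u ℓ k) z with hL2
  set M2 : (Fin n → ℂ) →L[ℂ] ℂ :=
    ∑ ℓ, (starRingEnd ℂ) (jac F z ℓ k) • fderiv ℂ (fun u => F u ℓ) z with hM2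
  have hmain : HasFDerivAt ψ (L2.restrictScalars ℝ + cj.comp (M2.restrictScalars ℝ)) z := by
    have hterm : ∀ ℓ : Fin n, HasFDerivAt (fun u => (starRingEnd ℂ) (F u ℓ) * jac F u ℓ k)
        ((starRingEnd ℂ) (F z ℓ) • ((fderiv ℂ (fun u => jac F u ℓ k) z).restrictScalars ℝ) +
          jac F z ℓ k • (cj.comp ((fderiv ℂ (fun u => F u ℓ) z).restrictScalars ℝ))) z := by
      intro ℓ
      have haR := (((comp_diff hF ℓ).differentiableAt (hU.mem_nhds hz)).hasFDerivAt).restrictScalars ℝ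
      have hconj : HasFDerivAt (fun u => (starRingEnd ℂ) (F u ℓ))
          (cj.comp ((fderiv ℂ (fun u => F u ℓ) z).restrictScalars ℝ)) z :=
        cj.hasFDerivAt.comp z haR
      have hbC : HasFDerivAt (fun u => jac F u ℓ k)
          (fderiv ℂ (fun u => jac F u ℓ k) z) z :=
        ((jac_diff hU hF ℓ k).differentiableAt (hU.mem_nhds hz)).hasFDerivAt
      have hbR := hbC.restrictScalars ℝ
      exact hconj.mul hbR
    have hsum := HasFDerivAt.fun_sum (fun ℓ (_ : ℓ ∈ Finset.univ) => hterm ℓ)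
    refine HasFDerivAt.congr_fderiv hsum ?_
    symm
    ext v
    simp only [ContinuousLinearMap.add_apply, ContinuousLinearMap.coe_restrictScalars',
      ContinuousLinearMap.comp_apply, cj_apply, hL2, hM2, ContinuousLinearMap.coe_sum',
      Finset.sum_apply, ContinuousLinearMap.coe_smul', Pi.smul_apply, smul_eq_mul, _root_.map_sum,
      _root_.map_mul, Complex.conj_conj, ContinuousLinearMap.add_apply]
    try rw [← Finset.sum_add_distrib]
    try exact Finset.sum_congr rfl fun ℓ _ => by ring
  have hkey := (key_wder L2 M2 hmain j).2
  rw [hkey, hM2]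
  simp only [ContinuousLinearMap.coe_sum', Finset.sum_apply, ContinuousLinearMap.coe_smul',
    Pi.smul_apply, smul_eq_mul, _root_.map_sum]
  rw [Matrix.mul_apply]
  apply Finset.sum_congr rfl
  intro ℓ _
  rw [Matrix.conjTranspose_apply]
  have h1 : (fderiv ℂ (fun u => F u ℓ) z) (Pi.single j 1) = jac F z ℓ j := rfl
  rw [h1, _root_.map_mul, Complex.conj_conj, RCLike.star_def]
  ring

end main

end S12


namespace S12LA

open Complex Matrix


variable {n : ℕ}

lemma rc_ofReal (x : ℝ) : (RCLike.ofReal x : ℂ) = Complex.ofReal x := rfl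

lemma star_dot_self (y : Fin n → ℂ) :
    star y ⬝ᵥ y = ((∑ j, Complex.normSq (y j) : ℝ) : ℂ) := by
  simp only [dotProduct, Pi.star_apply, RCLike.star_def, Complex.ofReal_sum]
  exact Finset.sum_congr rfl fun ℓ _ => by rw [mul_comm, Complex.mul_conj]

lemma quad_eq (A : Matrix (Fin n) (Fin n) ℂ) (v : Fin n → ℂ) :
    star v ⬝ᵥ ((Aᴴ * A) *ᵥ v) = ((∑ ℓ, Complex.normSq ((A *ᵥ v) ℓ) : ℝ) : ℂ) := by
  rw [← Matrix.mulVec_mulVec, Matrix.dotProduct_mulVec, ← Matrix.star_mulVec,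
    star_dot_self]

lemma rayleigh_ge {A : Matrix (Fin n) (Fin n) ℂ} (hA : A.IsHermitian) {c : ℝ}
    (hc : ∀ i, c ≤ hA.eigenvalues i) (v : Fin n → ℂ) :
    c * ∑ j, Complex.normSq (v j) ≤ (star v ⬝ᵥ (A *ᵥ v)).re := by
  classical
  set U : Matrix (Fin n) (Fin n) ℂ := (hA.eigenvectorUnitary : Matrix (Fin n) (Fin n) ℂ)
    with hU
  set w : Fin n → ℂ := star U *ᵥ v with hw
  have hsw : star w = star v ᵥ* U := by
    rw [hw, Matrix.star_mulVec, Matrix.star_eq_conjTranspose, Matrix.conjTranspose_conjTranspose]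
  have hUU : U * star U = 1 := Matrix.mem_unitaryGroup_iff.mp (hA.eigenvectorUnitary).2
  have hkey : star v ⬝ᵥ (A *ᵥ v)
      = ∑ i, (hA.eigenvalues i : ℂ) * (Complex.normSq (w i) : ℂ) := by
    conv_lhs => rw [hA.spectral_theorem, Unitary.conjStarAlgAut_apply]
    rw [← Matrix.mulVec_mulVec, ← Matrix.mulVec_mulVec, Matrix.dotProduct_mulVec, ← hsw]
    simp only [dotProduct, Matrix.mulVec_diagonal, Function.comp_apply, rc_ofReal]
    refine Finset.sum_congr rfl fun i _ => ?_
    have e1 : (star (↑hA.eigenvectorUnitary : Matrix (Fin n) (Fin n) ℂ) *ᵥ v) i = w i := rfl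
    have e2 : star (w i) * ((hA.eigenvalues i : ℂ) * w i)
        = (hA.eigenvalues i : ℂ) * (w i * star (w i)) := by ring
    rw [e1, Pi.star_apply, e2, RCLike.star_def, Complex.mul_conj]
  have hnormw : ∑ j, Complex.normSq (w j) = ∑ j, Complex.normSq (v j) := by
    have h1 : star w ⬝ᵥ w = star v ⬝ᵥ v := by
      rw [hsw, ← Matrix.dotProduct_mulVec, Matrix.mulVec_mulVec, hUU, Matrix.one_mulVec]
    rw [star_dot_self, star_dot_self] at h1
    exact_mod_cast h1
  have hre : (star v ⬝ᵥ (A *ᵥ v)).re = ∑ i, hA.eigenvalues i * Complex.normSq (w i) := by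
    rw [hkey, Complex.re_sum]
    exact Finset.sum_congr rfl fun i _ => by rw [← Complex.ofReal_mul, Complex.ofReal_re]
  rw [hre, ← hnormw, Finset.mul_sum]
  exact Finset.sum_le_sum fun i _ =>
    mul_le_mul_of_nonneg_right (hc i) (Complex.normSq_nonneg _)

lemma trace_eq {A : Matrix (Fin n) (Fin n) ℂ} (hA : A.IsHermitian) :
    A.trace = ((∑ i, hA.eigenvalues i : ℝ) : ℂ) := by
  conv_lhs => rw [hA.spectral_theorem, Unitary.conjStarAlgAut_apply]
  rw [Matrix.trace_mul_cycle,
    Matrix.mem_unitaryGroup_iff'.mp (hA.eigenvectorUnitary).2, one_mul, Matrix.trace_diagonal]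
  simp [Complex.ofReal_sum]

lemma trace_adj_eq {A : Matrix (Fin n) (Fin n) ℂ} (hA : A.IsHermitian) :
    (adjugate A).trace
      = ((∑ i, ∏ j ∈ Finset.univ.erase i, hA.eigenvalues j : ℝ) : ℂ) := by
  classical
  conv_lhs => rw [hA.spectral_theorem, Unitary.conjStarAlgAut_apply]
  rw [Matrix.adjugate_mul_distrib, Matrix.adjugate_mul_distrib, Matrix.trace_mul_comm,
    mul_assoc, ← Matrix.adjugate_mul_distrib,
    Matrix.mem_unitaryGroup_iff'.mp (hA.eigenvectorUnitary).2, Matrix.adjugate_one, mul_one,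
    Matrix.adjugate_diagonal, Matrix.trace_diagonal]
  simp [Complex.ofReal_sum, Complex.ofReal_prod]


end S12LA

namespace S12H

open Complex Matrix


variable {n : ℕ}

lemma trace_cts (B : Matrix (Fin n) (Fin n) ℂ) :
    (Bᴴ * B).trace = ((∑ ℓ, ∑ k, Complex.normSq (B ℓ k) : ℝ) : ℂ) := by
  simp only [Matrix.trace, Matrix.diag_apply, Matrix.mul_apply, Matrix.conjTranspose_apply,
    Complex.ofReal_sum]
  rw [Finset.sum_comm]
  refine Finset.sum_congr rfl fun ℓ _ => Finset.sum_congr rfl fun k _ => ?_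
  rw [RCLike.star_def, mul_comm, Complex.mul_conj]

lemma single_sum (hn : 0 < n) :
    ∑ j, Complex.normSq ((Pi.single (⟨0, hn⟩ : Fin n) 1 : Fin n → ℂ) j) = 1 := by
  classical
  simp [Pi.single_apply, apply_ite Complex.normSq]

lemma diffOn_prod {ι : Type*} [DecidableEq ι] {s : Set (Fin n → ℂ)} (t : Finset ι)
    (f : ι → (Fin n → ℂ) → ℂ) (h : ∀ i ∈ t, DifferentiableOn ℂ (f i) s) :
    DifferentiableOn ℂ (fun z => ∏ i ∈ t, f i z) s := by
  classical
  induction t using Finset.induction with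
  | empty => simpa using differentiableOn_const (1 : ℂ)
  | @insert a t hnotmem ih =>
    simp only [Finset.prod_insert hnotmem]
    exact (h a (Finset.mem_insert_self a t)).mul
      (ih fun i hi => h i (Finset.mem_insert_of_mem hi))

lemma mulvec_adj (B : Matrix (Fin n) (Fin n) ℂ) (i : Fin n) :
    B *ᵥ (fun k => B.adjugate k i) = fun ℓ => B.det * (1 : Matrix (Fin n) (Fin n) ℂ) ℓ i := by
  have h1 : B *ᵥ (fun k => B.adjugate k i) = fun ℓ => (B * B.adjugate) ℓ i := by
    funext ℓ
    simp [Matrix.mulVec, Matrix.mul_apply, dotProduct]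
  rw [h1, Matrix.mul_adjugate]
  funext ℓ
  simp

lemma sum_normSq_mulvec_adj (B : Matrix (Fin n) (Fin n) ℂ) (i : Fin n) :
    ∑ ℓ, Complex.normSq ((B *ᵥ (fun k => B.adjugate k i)) ℓ) = Complex.normSq B.det := by
  rw [mulvec_adj]
  rw [Finset.sum_eq_single i]
  · simp
  · intro b _ hb
    simp [Matrix.one_apply, hb]
  · intro h
    exact absurd (Finset.mem_univ i) h


end S12H

namespace S12F

open Matrix

variable {n : ℕ}

lemma leviQ_eq (φ : (Fin n → ℂ) → ℝ) (z v : Fin n → ℂ) :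
    leviQ φ z v = star v ⬝ᵥ (levi φ z *ᵥ v) := by
  simp only [leviQ, dotProduct, Matrix.mulVec, Pi.star_apply, RCLike.star_def,
    Finset.mul_sum]
  exact Finset.sum_congr rfl fun j _ => Finset.sum_congr rfl fun k _ => by ring

lemma adj_diff {U : Set (Fin n → ℂ)} {F : (Fin n → ℂ) → Fin n → ℂ}
    (hU : IsOpen U) (hF : DifferentiableOn ℂ F U) (k i : Fin n) :
    DifferentiableOn ℂ (fun z => Matrix.adjugate (S12.jac F z) k i) U := by
  classical
  have hshow : (fun z => Matrix.adjugate (S12.jac F z) k i)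
      = fun z => ∑ σ : Equiv.Perm (Fin n), (Equiv.Perm.sign σ : ℤ) *
          ∏ j, ((S12.jac F z).updateRow i (Pi.single k 1)) (σ j) j := by
    funext z
    rw [Matrix.adjugate_apply, Matrix.det_apply']
  rw [hshow]
  apply DifferentiableOn.fun_sum
  intro σ _
  apply DifferentiableOn.const_mul
  apply S12H.diffOn_prod
  intro j _
  by_cases hji : σ j = i
  · simp only [Matrix.updateRow_apply, if_pos hji]
    exact differentiableOn_const _
  · simp only [Matrix.updateRow_apply, if_neg hji]
    exact S12.jac_diff hU hF (σ j) j

end S12F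

open Matrix
open scoped ComplexOrder

/-- existence of approximate minimal eigenvector fields:
if `F : U → ℂⁿ` is holomorphic, `φ = Σ|F_ℓ|²`, and the kernel of the Levi form
`H(p)` is one-dimensional, then there is a holomorphic vector field `X` near `p`
with `X(p) ≠ 0` and `(H(z)X(z), X(z)) ≤ C λ₁(z)` near `p`. -/
theorem statement12 {n : ℕ} (U : Set (Fin n → ℂ)) (hU : IsOpen U)
    (p : Fin n → ℂ) (hp : p ∈ U)
    (F : (Fin n → ℂ) → Fin n → ℂ) (hF : DifferentiableOn ℂ F U)
    (φ : (Fin n → ℂ) → ℝ) (hφ : ∀ z, φ z = ∑ ℓ, Complex.normSq (F z ℓ))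
    (hker : Module.finrank ℂ ↥(LinearMap.ker (Matrix.toLin' (levi φ p))) = 1) :
    ∃ V : Set (Fin n → ℂ), IsOpen V ∧ p ∈ V ∧ V ⊆ U ∧
      ∃ X : (Fin n → ℂ) → Fin n → ℂ, DifferentiableOn ℂ X V ∧ X p ≠ 0 ∧
        ∃ C : ℝ, 0 < C ∧ ∀ z ∈ V, (leviQ φ z (X z)).re ≤ C * lambdaMin φ z := by
  classical
  have hφfun : φ = fun w => ∑ ℓ, Complex.normSq (F w ℓ) := funext hφ
  subst hφfun
  set A := S12.jac F p with hAdef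
  have hHp : levi (fun w => ∑ ℓ, Complex.normSq (F w ℓ)) p = Aᴴ * A := S12.levi_eq hU hF hp
  -- rank considerations
  have hker' : Module.finrank ℂ ↥(LinearMap.ker ((Aᴴ * A).mulVecLin)) = 1 := by
    have heq : Matrix.toLin' (levi (fun w => ∑ ℓ, Complex.normSq (F w ℓ)) p)
        = (Aᴴ * A).mulVecLin := by
      rw [hHp]
      exact LinearMap.ext fun v => by rw [Matrix.toLin'_apply, Matrix.mulVecLin_apply]
    rw [← heq]
    exact hker
  have hrn := LinearMap.finrank_range_add_finrank_ker ((Aᴴ * A).mulVecLin)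
  rw [hker'] at hrn
  have hfr : Module.finrank ℂ (Fin n → ℂ) = n := by
    rw [Module.finrank_fintype_fun_eq_card, Fintype.card_fin]
  rw [hfr] at hrn
  have hrank : (Aᴴ * A).rank = n - 1 := by
    have : (Aᴴ * A).rank = Module.finrank ℂ (LinearMap.range (Aᴴ * A).mulVecLin) := rfl
    omega
  have hn : 0 < n := by omega
  have hpsd : (Aᴴ * A).PosSemidef := Matrix.posSemidef_conjTranspose_mul_self A
  have hherm := hpsd.1
  -- zero eigenvalue structure at p
  have hcard : Fintype.card {i // hherm.eigenvalues i ≠ 0} = n - 1 := by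
    rw [← hherm.rank_eq_card_non_zero_eigs, hrank]
  have hcard0 : Fintype.card {i // hherm.eigenvalues i = 0} = 1 := by
    have e : {i // hherm.eigenvalues i = 0} ≃ {i // ¬ (hherm.eigenvalues i ≠ 0)} :=
      Equiv.subtypeEquivRight fun i => (not_not).symm
    rw [Fintype.card_congr e, Fintype.card_subtype_compl, hcard, Fintype.card_fin]
    omega
  obtain ⟨⟨i₀, hi₀⟩, huniq⟩ := Fintype.card_eq_one_iff.mp hcard0
  have hzero_iff : ∀ j, hherm.eigenvalues j = 0 → j = i₀ :=
    fun j hj => congrArg Subtype.val (huniq ⟨j, hj⟩)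
  -- positivity of the trace of the adjugate
  have hTppos : 0 < ∑ i, ∏ j ∈ Finset.univ.erase i, hherm.eigenvalues j := by
    have h1 : ∑ i, ∏ j ∈ Finset.univ.erase i, hherm.eigenvalues j
        = ∏ j ∈ Finset.univ.erase i₀, hherm.eigenvalues j := by
      apply Finset.sum_eq_single_of_mem i₀ (Finset.mem_univ i₀)
      intro i _ hne
      exact Finset.prod_eq_zero (Finset.mem_erase.mpr ⟨Ne.symm hne, Finset.mem_univ i₀⟩) hi₀
    rw [h1]
    apply Finset.prod_pos
    intro j hj
    rcases Finset.mem_erase.mp hj with ⟨hjne, _⟩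
    refine lt_of_le_of_ne (hpsd.eigenvalues_nonneg j) ?_
    intro h
    exact hjne (hzero_iff j h.symm)
  have hadjA : Matrix.adjugate A ≠ 0 := by
    intro h0
    have h1 : Matrix.adjugate (Aᴴ * A) = 0 := by
      rw [Matrix.adjugate_mul_distrib, h0, Matrix.zero_mul]
    have h2 := S12LA.trace_adj_eq hherm
    rw [h1, Matrix.trace_zero] at h2
    have h3 : (∑ i, ∏ j ∈ Finset.univ.erase i, hherm.eigenvalues j) = 0 := by
      exact_mod_cast h2.symm
    exact hTppos.ne' h3
  obtain ⟨k₀, i₀c, hk₀⟩ : ∃ k i, Matrix.adjugate A k i ≠ 0 := by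
    by_contra h
    push_neg at h
    exact hadjA (by ext k i; simpa using h k i)
  -- the trace control function
  set tfun : (Fin n → ℂ) → ℝ := fun z => ∑ ℓ, ∑ k, Complex.normSq (S12.jac F z ℓ k)
    with htfun
  have htcont : ContinuousOn tfun U := by
    apply continuousOn_finset_sum
    intro ℓ _
    apply continuousOn_finset_sum
    intro k _
    exact Complex.continuous_normSq.comp_continuousOn (S12.jac_diff hU hF ℓ k).continuousOn
  have htnonneg : ∀ z, 0 ≤ tfun z := by
    intro z
    apply Finset.sum_nonneg
    intro ℓ _
    apply Finset.sum_nonneg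
    intro k _
    exact Complex.normSq_nonneg _
  set T : ℝ := tfun p + 1 with hTdef
  have hT1 : 1 ≤ T := by have := htnonneg p; linarith
  have hT0 : 0 < T := by linarith
  set V : Set (Fin n → ℂ) := U ∩ tfun ⁻¹' (Set.Iio T) with hVdef
  have hVopen : IsOpen V := htcont.isOpen_inter_preimage hU isOpen_Iio
  have hpV : p ∈ V := ⟨hp, by simp only [Set.mem_preimage, Set.mem_Iio, hTdef]; linarith⟩
  have hVU : V ⊆ U := Set.inter_subset_left
  set X : (Fin n → ℂ) → Fin n → ℂ := fun z k => Matrix.adjugate (S12.jac F z) k i₀c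
    with hXdef
  refine ⟨V, hVopen, hpV, hVU, X, ?_, ?_, T ^ (n - 1), pow_pos hT0 _, ?_⟩
  · -- differentiability of X
    rw [differentiableOn_pi]
    intro k
    exact (S12F.adj_diff hU hF k i₀c).mono hVU
  · -- X p ≠ 0
    intro h
    exact hk₀ (congrFun h k₀)
  · -- the main estimate
    intro z hz
    obtain ⟨hzU, hzT⟩ := hz
    rw [Set.mem_preimage, Set.mem_Iio] at hzT
    set B := S12.jac F z with hBdef
    have hHz : levi (fun w => ∑ ℓ, Complex.normSq (F w ℓ)) z = Bᴴ * B := S12.levi_eq hU hF hzU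
    have hpsdz : (Bᴴ * B).PosSemidef := Matrix.posSemidef_conjTranspose_mul_self B
    have hhermz := hpsdz.1
    have hνnonneg : ∀ i, 0 ≤ hhermz.eigenvalues i := hpsdz.eigenvalues_nonneg
    have htr : ∑ i, hhermz.eigenvalues i = tfun z := by
      have h1 := S12LA.trace_eq hhermz
      have h2 := S12H.trace_cts B
      rw [h1] at h2
      exact_mod_cast h2
    have hνle : ∀ i, hhermz.eigenvalues i ≤ T := by
      intro i
      calc hhermz.eigenvalues i ≤ ∑ j, hhermz.eigenvalues j :=
            Finset.single_le_sum (fun j _ => hνnonneg j) (Finset.mem_univ i)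
        _ = tfun z := htr
        _ ≤ T := hzT.le
    obtain ⟨imin, _, hmin⟩ := Finset.exists_min_image Finset.univ hhermz.eigenvalues
      ⟨⟨0, hn⟩, Finset.mem_univ _⟩
    -- lower bound for lambdaMin
    have hlam : hhermz.eigenvalues imin
        ≤ lambdaMin (fun w => ∑ ℓ, Complex.normSq (F w ℓ)) z := by
      apply le_csInf
      · refine ⟨(leviQ (fun w => ∑ ℓ, Complex.normSq (F w ℓ)) z
          (Pi.single (⟨0, hn⟩ : Fin n) 1)).re, Pi.single (⟨0, hn⟩ : Fin n) 1,
          S12H.single_sum hn, rfl⟩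
      · rintro r ⟨v, hv1, rfl⟩
        have hray := S12LA.rayleigh_ge hhermz (fun i => hmin i (Finset.mem_univ i)) v
        rw [hv1, mul_one] at hray
        rw [S12F.leviQ_eq, hHz]
        exact hray
    -- value of the quadratic form at X z
    have hLHS : (leviQ (fun w => ∑ ℓ, Complex.normSq (F w ℓ)) z (X z)).re
        = Complex.normSq B.det := by
      rw [S12F.leviQ_eq, hHz]
      have h1 : star (X z) ⬝ᵥ ((Bᴴ * B) *ᵥ (X z))
          = ((∑ ℓ, Complex.normSq ((B *ᵥ (X z)) ℓ) : ℝ) : ℂ) := S12LA.quad_eq B (X z)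
      rw [h1, Complex.ofReal_re]
      exact S12H.sum_normSq_mulvec_adj B i₀c
    -- determinant and eigenvalues
    have hdet : Complex.normSq B.det = ∏ i, hhermz.eigenvalues i := by
      have h1 : (Bᴴ * B).det = ((∏ i, hhermz.eigenvalues i : ℝ) : ℂ) := by
        rw [hhermz.det_eq_prod_eigenvalues, Complex.ofReal_prod]
        rfl
      have h2 : (Bᴴ * B).det = ((Complex.normSq B.det : ℝ) : ℂ) := by
        rw [Matrix.det_mul, Matrix.det_conjTranspose, RCLike.star_def, mul_comm,
          Complex.mul_conj]
      exact_mod_cast h2.symm.trans h1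
    have hprod : ∏ i, hhermz.eigenvalues i ≤ hhermz.eigenvalues imin * T ^ (n - 1) := by
      rw [← Finset.mul_prod_erase Finset.univ hhermz.eigenvalues (Finset.mem_univ imin)]
      apply mul_le_mul_of_nonneg_left _ (hνnonneg imin)
      calc ∏ i ∈ Finset.univ.erase imin, hhermz.eigenvalues i
          ≤ ∏ _i ∈ Finset.univ.erase imin, T :=
            Finset.prod_le_prod (fun i _ => hνnonneg i) (fun i _ => hνle i)
        _ = T ^ (n - 1) := by
            rw [Finset.prod_const, Finset.card_erase_of_mem (Finset.mem_univ imin),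
              Finset.card_univ, Fintype.card_fin]
    calc (leviQ (fun w => ∑ ℓ, Complex.normSq (F w ℓ)) z (X z)).re
        = ∏ i, hhermz.eigenvalues i := by rw [hLHS, hdet]
      _ ≤ hhermz.eigenvalues imin * T ^ (n - 1) := hprod
      _ ≤ lambdaMin (fun w => ∑ ℓ, Complex.normSq (F w ℓ)) z * T ^ (n - 1) :=
            mul_le_mul_of_nonneg_right hlam (by positivity)
      _ = T ^ (n - 1) * lambdaMin (fun w => ∑ ℓ, Complex.normSq (F w ℓ)) z := mul_comm _ _
end
end
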